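/- Let e₁ and e₂ be integers with e₂ > e₁ ≥ 0, and define σ : SL(2,k) → SL(4,k) by σ(A) = A^{(p^{e₂})} ⊗ A^{(p^{e₁})}. Then σ is indecomposable: there exist no k-subspaces V₁, V₂ of k⁴ with V₁ ≠ 0, V₂ ≠ 0 and k⁴ = V₁ ⊕ V₂ such that σ(A)·V₁ ⊆ V₁ and σ(A)·V₂ ⊆ V₂ for all A ∈ SL(2,k). -/

import Mathlib

/-!
In fact `σ` is irreducible. For a transvection `A = 1 + t N` with `N = E₁₂` or `E₂₁` one has
`σ(A) = 1 + t^q (1 ⊗ N) + t^Q (N ⊗ 1) + t^(Q+q) (N ⊗ N)` with `q = p^e₁ < Q = p^e₂`. The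
exponents `0 < q < Q < Q + q` are distinct and `k` is infinite, so a `σ`-invariant subspace is
stable under `1 ⊗ N`, `N ⊗ 1` and `N ⊗ N` separately. The lowering operators (`N = E₂₁`) carry
every nonzero vector to a nonzero multiple of the lowest weight vector `e₃`, and the raising
operators carry `e₃` to the other three basis vectors.
-/

open Matrix

/-- Entrywise `m`-th power of a 2×2 matrix: `A^{(m)} = [[a^m, b^m],[c^m, d^m]]`. -/
noncomputable def entryPow {k : Type*} [Field k] (A : Matrix (Fin 2) (Fin 2) k) (m : ℕ) :
    Matrix (Fin 2) (Fin 2) k :=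
  Matrix.of fun i j => A i j ^ m

/-- The Kronecker product of two 2×2 matrices as a 4×4 matrix in 2×2 blocks. -/
noncomputable def kron4 {k : Type*} [Field k] (X Y : Matrix (Fin 2) (Fin 2) k) :
    Matrix (Fin 4) (Fin 4) k :=
  !![X 0 0 * Y 0 0, X 0 0 * Y 0 1, X 0 1 * Y 0 0, X 0 1 * Y 0 1;
     X 0 0 * Y 1 0, X 0 0 * Y 1 1, X 0 1 * Y 1 0, X 0 1 * Y 1 1;
     X 1 0 * Y 0 0, X 1 0 * Y 0 1, X 1 1 * Y 0 0, X 1 1 * Y 0 1;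
     X 1 0 * Y 1 0, X 1 0 * Y 1 1, X 1 1 * Y 1 0, X 1 1 * Y 1 1]

open Polynomial in
theorem Submodule.mem_of_forall_sum_pow_smul_mem {k V ι : Type*} [Field k] [Infinite k]
    [AddCommGroup V] [Module k V] [Fintype ι] (W : Submodule k V) {n : ι → ℕ}
    (hn : Function.Injective n) {c : ι → V} (h : ∀ t : k, ∑ i, t ^ n i • c i ∈ W) (i : ι) :
    c i ∈ W := by
  rw [← Submodule.Quotient.mk_eq_zero, ← Module.forall_dual_apply_eq_zero_iff k]
  intro ψ
  set φ := ψ ∘ₗ W.mkQ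
  show φ (c i) = 0
  have hP : ∑ j, C (φ (c j)) * X ^ n j = 0 := by
    refine Polynomial.funext fun t => ?_
    have hφ : φ (∑ j, t ^ n j • c j) = 0 := by
      rw [LinearMap.comp_apply, Submodule.mkQ_apply,
        (Submodule.Quotient.mk_eq_zero W).2 (h t), map_zero]
    simp only [map_sum, map_smul, smul_eq_mul] at hφ
    simp only [eval_finsetSum, eval_mul, eval_C, eval_pow, eval_X, eval_zero, ← hφ, mul_comm]
  have hcoeff := congrArg (coeff · (n i)) hP
  simp only [finsetSum_coeff, coeff_C_mul_X_pow, coeff_zero] at hcoeff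
  rwa [Finset.sum_eq_single i (fun j _ hj => if_neg (hn.ne (Ne.symm hj))) (by simp),
    if_pos rfl] at hcoeff

theorem entryPow_transvection {k : Type*} [Field k] {i j : Fin 2} (hij : i ≠ j) (c : k)
    {m : ℕ} (hm : m ≠ 0) : entryPow (transvection i j c) m = transvection i j (c ^ m) := by
  ext a b
  by_cases hab : a = b
  · subst hab
    have : ¬(i = a ∧ j = a) := fun h => hij (h.1.trans h.2.symm)
    simp [entryPow, transvection, single_apply, this]
  · by_cases h : i = a ∧ j = b
    · obtain ⟨rfl, rfl⟩ := h
      simp [entryPow, transvection, one_apply_ne hab]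
    · simp [entryPow, transvection, one_apply_ne hab, single_apply, h, hm]

theorem kron4_one_add_smul {k : Type*} [Field k] (a b : k) (X Y : Matrix (Fin 2) (Fin 2) k) :
    kron4 (1 + a • X) (1 + b • Y) =
      1 + b • kron4 1 Y + a • kron4 X 1 + (a * b) • kron4 X Y := by
  ext r s
  fin_cases r <;> fin_cases s <;> simp [kron4, one_apply] <;> ring

def IsKron4Invariant {k : Type*} [Field k] (m n : ℕ) (W : Submodule k (Fin 4 → k)) : Prop :=
  ∀ A : SpecialLinearGroup (Fin 2) k, ∀ v ∈ W, kron4 (entryPow A.1 m) (entryPow A.1 n) *ᵥ v ∈ W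

section Invariant

variable {k : Type*} [Field k] [Infinite k] {m n : ℕ} {W : Submodule k (Fin 4 → k)}

theorem IsKron4Invariant.kron4_single_mulVec_mem (hW : IsKron4Invariant m n W) (hn : 0 < n)
    (hnm : n < m) {i j : Fin 2} (hij : i ≠ j) {v : Fin 4 → k} (hv : v ∈ W) :
    kron4 1 (single i j 1) *ᵥ v ∈ W ∧ kron4 (single i j 1) 1 *ᵥ v ∈ W ∧
      kron4 (single i j 1) (single i j 1) *ᵥ v ∈ W := by
  set N : Matrix (Fin 2) (Fin 2) k := single i j 1
  have htransvection (c : k) : transvection i j c = 1 + c • N := by simp [transvection, N]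
  have hcurve (t : k) : ∑ l, t ^ ![0, n, m, m + n] l •
      ![v, kron4 1 N *ᵥ v, kron4 N 1 *ᵥ v, kron4 N N *ᵥ v] l ∈ W := by
    have hA := hW ⟨transvection i j t, det_transvection_of_ne i j hij t⟩ v hv
    rw [entryPow_transvection hij _ (hn.trans hnm).ne', entryPow_transvection hij _ hn.ne',
      htransvection, htransvection, kron4_one_add_smul] at hA
    simpa [Fin.sum_univ_four, add_mulVec, smul_mulVec, pow_add, mul_comm] using hA
  have hinj : Function.Injective ![0, n, m, m + n] := by
    intro a b hab
    fin_cases a <;> fin_cases b <;> simp at hab ⊢ <;> omega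
  exact ⟨W.mem_of_forall_sum_pow_smul_mem hinj hcurve 1,
    W.mem_of_forall_sum_pow_smul_mem hinj hcurve 2, W.mem_of_forall_sum_pow_smul_mem hinj hcurve 3⟩

theorem IsKron4Invariant.single_three_mem (hW : IsKron4Invariant m n W) (hn : 0 < n)
    (hnm : n < m) (hW₀ : W ≠ ⊥) : Pi.single 3 1 ∈ W := by
  set F : Matrix (Fin 2) (Fin 2) k := single 1 0 1
  obtain ⟨v, hv, hv₀⟩ := W.exists_mem_ne_zero_of_ne_bot hW₀
  obtain ⟨h1F, hF1, hFF⟩ := hW.kron4_single_mulVec_mem hn hnm (i := 1) (j := 0) (by simp) hv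
  have hlower : kron4 1 F *ᵥ v = v 0 • Pi.single 1 1 + v 2 • Pi.single 3 1 ∧
      kron4 F 1 *ᵥ v = v 0 • Pi.single 2 1 + v 1 • Pi.single 3 1 ∧
      kron4 F F *ᵥ v = v 0 • Pi.single 3 1 := by
    refine ⟨?_, ?_, ?_⟩ <;> ext l <;> fin_cases l <;>
      simp [F, kron4, mulVec, dotProduct, Fin.sum_univ_four]
  rw [hlower.1] at h1F
  rw [hlower.2.1] at hF1
  rw [hlower.2.2] at hFF
  have key {c : k} (hc : c ≠ 0) (h : c • Pi.single 3 1 ∈ W) : Pi.single 3 1 ∈ W :=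
    (W.smul_mem_iff hc).1 h
  by_cases h₀ : v 0 = 0
  · by_cases h₁ : v 1 = 0
    · by_cases h₂ : v 2 = 0
      · have hv₃ : v = v 3 • Pi.single 3 1 := by
          ext l; fin_cases l <;> simp [h₀, h₁, h₂]
        refine key (fun h₃ => hv₀ ?_) (hv₃ ▸ hv)
        rw [hv₃, h₃, zero_smul]
      · exact key h₂ (by simpa [h₀] using h1F)
    · exact key h₁ (by simpa [h₀] using hF1)
  · exact key h₀ hFF

theorem IsKron4Invariant.eq_top (hW : IsKron4Invariant m n W) (hn : 0 < n) (hnm : n < m)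
    (hW₀ : W ≠ ⊥) : W = ⊤ := by
  set E : Matrix (Fin 2) (Fin 2) k := single 0 1 1
  have he₃ := hW.single_three_mem hn hnm hW₀
  obtain ⟨h1E, hE1, hEE⟩ := hW.kron4_single_mulVec_mem hn hnm (i := 0) (j := 1) (by simp) he₃
  have hraise : kron4 E E *ᵥ Pi.single 3 1 = Pi.single 0 1 ∧
      kron4 E 1 *ᵥ Pi.single 3 1 = Pi.single 1 1 ∧
      kron4 1 E *ᵥ Pi.single 3 1 = Pi.single 2 (1 : k) := by
    refine ⟨?_, ?_, ?_⟩ <;> ext l <;> fin_cases l <;>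
      simp [E, kron4, mulVec, dotProduct, Fin.sum_univ_four]
  rw [hraise.1] at hEE
  rw [hraise.2.1] at hE1
  rw [hraise.2.2] at h1E
  rw [eq_top_iff, ← (Pi.basisFun k (Fin 4)).span_eq, Submodule.span_le]
  rintro _ ⟨l, rfl⟩
  fin_cases l <;> simpa

end Invariant

theorem stmt19_general {k : Type*} [Field k] [IsAlgClosed k] {p : ℕ} [Fact p.Prime]
    (e₁ e₂ : ℕ) (h : e₁ < e₂) :
    ¬∃ V₁ V₂ : Submodule k (Fin 4 → k),
      V₁ ≠ ⊥ ∧ V₂ ≠ ⊥ ∧ IsCompl V₁ V₂ ∧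
        (∀ A : SpecialLinearGroup (Fin 2) k, ∀ v ∈ V₁,
          kron4 (entryPow A.1 (p ^ e₂)) (entryPow A.1 (p ^ e₁)) *ᵥ v ∈ V₁) ∧
        ∀ A : SpecialLinearGroup (Fin 2) k, ∀ v ∈ V₂,
          kron4 (entryPow A.1 (p ^ e₂)) (entryPow A.1 (p ^ e₁)) *ᵥ v ∈ V₂ := by
  rintro ⟨V₁, V₂, hV₁, hV₂, hc, hI₁, -⟩
  have hp : p.Prime := Fact.out
  have htop : V₁ = ⊤ :=
    IsKron4Invariant.eq_top hI₁ (pow_pos hp.pos e₁) (Nat.pow_lt_pow_right hp.one_lt h) hV₁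
  exact hV₂ (top_disjoint.mp (htop ▸ hc.disjoint))

/-- The Kronecker-product homomorphism
`σ(A) = A^{(p^{e₂})} ⊗ A^{(p^{e₁})}` (with `e₂ > e₁ ≥ 0`) is indecomposable: `k⁴` admits
no direct sum decomposition into two nonzero `σ`-invariant subspaces. -/
theorem stmt19 {k : Type*} [Field k] [IsAlgClosed k] {p : ℕ} [Fact p.Prime] [CharP k p]
    (e₁ e₂ : ℕ) (h : e₁ < e₂) :
    ¬∃ V₁ V₂ : Submodule k (Fin 4 → k),
      V₁ ≠ ⊥ ∧ V₂ ≠ ⊥ ∧ IsCompl V₁ V₂ ∧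
        (∀ A : SpecialLinearGroup (Fin 2) k, ∀ v ∈ V₁,
          kron4 (entryPow A.1 (p ^ e₂)) (entryPow A.1 (p ^ e₁)) *ᵥ v ∈ V₁) ∧
        ∀ A : SpecialLinearGroup (Fin 2) k, ∀ v ∈ V₂,
          kron4 (entryPow A.1 (p ^ e₂)) (entryPow A.1 (p ^ e₁)) *ᵥ v ∈ V₂ :=
  stmt19_general e₁ e₂ h
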